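/- Fix N ∈ ℕ, T > 0 and 0 < s < t < T. Then for every x ∈ ℝ^N_<, the transition probability density g_{N,T}(s, x; t, y) = f_N(t−s; x, y) 𝒩_N(T−t; y) / 𝒩_N(T−s; x) integrates to one over the Weyl chamber: ∫_{ℝ^N_<} g_{N,T}(s, x; t, y) dy = 1. -/

import Mathlib

open MeasureTheory

/-- The heat kernel `p_t(x,y) = (2πt)^{-1/2} exp(-(x-y)²/(2t))`. -/
noncomputable def heatKernel (t x y : ℝ) : ℝ :=
  (1 / Real.sqrt (2 * Real.pi * t)) * Real.exp (-(x - y)^2 / (2 * t))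

/-- The Weyl chamber `ℝ^N_< = {x : x_1 < x_2 < ⋯ < x_N}`. -/
def weylChamber (N : ℕ) : Set (Fin N → ℝ) := {x | StrictMono x}

/-- The Karlin–McGregor determinant `f_N(t; x, y) = det[p_t(x_i, y_j)]`. -/
noncomputable def fKM (N : ℕ) (t : ℝ) (x y : Fin N → ℝ) : ℝ :=
  Matrix.det (Matrix.of fun i j => heatKernel t (x i) (y j))

/-- The non-colliding probability `𝒩_N(t; x) = ∫_{ℝ^N_<} f_N(t; x, y) dy`. -/
noncomputable def NKM (N : ℕ) (t : ℝ) (x : Fin N → ℝ) : ℝ :=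
  ∫ y in weylChamber N, fKM N t x y

/-!
By Andréief's identity (expand both determinants and integrate coordinatewise) and the
Chapman–Kolmogorov equation for the heat kernel, `∫_{ℝ^N} f_a(x,y) f_b(y,w) dy = N! f_{a+b}(x,w)`.
The integrand is symmetric in `y`, so the integral over the Weyl chamber is `f_{a+b}(x,w)`;
integrating in `w` (Fubini) gives `∫_{ℝ^N_<} f_{t-s}(x,y) 𝒩_N(T-t; y) dy = 𝒩_N(T-s; x)`.
It remains to see `𝒩_N(T-s; x) > 0`, i.e. `f_N > 0` on the chamber. This is the strict total
positivity of the Gaussian kernel: for increasing `u, v` the determinant `det[e^{u_i v_j}]` never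
vanishes (a Rolle argument on exponential sums), and it is a positive Vandermonde determinant at
`u = v = (0, 1, …, N - 1)`, hence positive on the whole connected set of such pairs.
-/

open Real Matrix ProbabilityTheory
open scoped Nat

/-- For `t ≤ 0` both sides are junk zeros: `√(2πt) = 0` and `1 / 0 = 0`. -/
lemma heatKernel_eq_gaussianPDFReal (t x y : ℝ) :
    heatKernel t x y = gaussianPDFReal x t.toNNReal y := by
  rcases le_or_gt t 0 with ht | ht
  · have : Real.sqrt (2 * π * t) = 0 := Real.sqrt_eq_zero'.2 (by nlinarith [pi_pos])
    simp [heatKernel, Real.toNNReal_of_nonpos ht, this]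
  · rw [heatKernel, gaussianPDFReal, Real.coe_toNNReal _ ht.le, one_div, ← neg_sub y x, neg_sq]

lemma integrable_heatKernel (t x : ℝ) : Integrable (heatKernel t x) := by
  rw [funext (heatKernel_eq_gaussianPDFReal t x)]
  exact integrable_gaussianPDFReal x t.toNNReal

lemma integral_heatKernel {t : ℝ} (ht : 0 < t) (x : ℝ) : ∫ y, heatKernel t x y = 1 := by
  simpa only [heatKernel_eq_gaussianPDFReal] using
    integral_gaussianPDFReal_eq_one x (Real.toNNReal_pos.2 ht).ne'

lemma continuous_heatKernel (t : ℝ) : Continuous fun p : ℝ × ℝ => heatKernel t p.1 p.2 := by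
  unfold heatKernel
  fun_prop

lemma heatKernel_mul_heatKernel {a b : ℝ} (ha : 0 < a) (hb : 0 < b) (x y z : ℝ) :
    heatKernel a x z * heatKernel b z y =
      heatKernel (a + b) x y * heatKernel (a * b / (a + b)) ((b * x + a * y) / (a + b)) z := by
  unfold heatKernel
  rw [mul_mul_mul_comm, ← Real.exp_add, mul_mul_mul_comm, ← Real.exp_add, div_mul_div_comm,
    div_mul_div_comm, ← Real.sqrt_mul (by positivity), ← Real.sqrt_mul (by positivity)]
  congr 1
  · congr 2
    field_simp
  · congr 1
    field_simp
    ring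

lemma integrable_heatKernel_mul_heatKernel {a b : ℝ} (ha : 0 < a) (hb : 0 < b) (x y : ℝ) :
    Integrable fun z => heatKernel a x z * heatKernel b z y := by
  simp_rw [heatKernel_mul_heatKernel ha hb x y]
  exact (integrable_heatKernel _ _).const_mul _

lemma integral_heatKernel_mul_heatKernel {a b : ℝ} (ha : 0 < a) (hb : 0 < b) (x y : ℝ) :
    ∫ z, heatKernel a x z * heatKernel b z y = heatKernel (a + b) x y := by
  simp_rw [heatKernel_mul_heatKernel ha hb x y]
  rw [integral_const_mul, integral_heatKernel (by positivity), mul_one]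

section WeylChamber

variable {n : ℕ}

lemma isOpen_weylChamber (n : ℕ) : IsOpen (weylChamber n) := by
  have : weylChamber n = ⋂ (i : Fin n) (j : Fin n) (_ : i < j), {x | x i < x j} := by
    ext x
    simp [weylChamber, StrictMono]
  rw [this]
  exact isOpen_iInter_of_finite fun i => isOpen_iInter_of_finite fun j =>
    isOpen_iInter_of_finite fun _ => isOpen_lt (continuous_apply i) (continuous_apply j)

lemma convex_weylChamber (n : ℕ) : Convex ℝ (weylChamber n) := by
  intro u hu v hv a b ha hb hab i j hij
  have := hu hij
  have := hv hij
  simp only [Pi.add_apply, Pi.smul_apply, smul_eq_mul]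
  rcases ha.eq_or_lt with rfl | ha'
  · simp_all
  · nlinarith

lemma volume_setOf_not_injective (n : ℕ) :
    volume {y : Fin n → ℝ | ¬ Function.Injective y} = 0 := by
  have hsub : {y : Fin n → ℝ | ¬ Function.Injective y} ⊆
      ⋃ (i : Fin n) (j : Fin n) (_ : i ≠ j),
        (LinearMap.ker ((LinearMap.proj i : (Fin n → ℝ) →ₗ[ℝ] ℝ) - LinearMap.proj j) :
          Set (Fin n → ℝ)) := by
    intro y hy
    simp only [Set.mem_ofPred_eq, Function.Injective, not_forall] at hy
    obtain ⟨i, j, hij, hne⟩ := hy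
    simp only [Set.mem_iUnion, SetLike.mem_coe, LinearMap.mem_ker, LinearMap.sub_apply,
      LinearMap.proj_apply, sub_eq_zero]
    exact ⟨i, j, hne, hij⟩
  refine measure_mono_null hsub (measure_iUnion_null fun i => measure_iUnion_null fun j =>
    measure_iUnion_null fun hij => Measure.addHaar_submodule _ _ fun htop => ?_)
  have : (Pi.single i 1 : Fin n → ℝ) ∈ LinearMap.ker
      ((LinearMap.proj i : (Fin n → ℝ) →ₗ[ℝ] ℝ) - LinearMap.proj j) :=
    htop ▸ Submodule.mem_top
  simp [Pi.single_eq_of_ne' hij] at this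

lemma measurePreserving_comp_perm (σ : Equiv.Perm (Fin n)) :
    MeasurePreserving (fun y : Fin n → ℝ => y ∘ σ) :=
  volume_preserving_arrowCongr' σ.symm (MeasurableEquiv.refl ℝ) (.id volume)

lemma measurableEmbedding_comp_perm (σ : Equiv.Perm (Fin n)) :
    MeasurableEmbedding (fun y : Fin n → ℝ => y ∘ σ) :=
  (MeasurableEquiv.arrowCongr' σ.symm (MeasurableEquiv.refl ℝ)).measurableEmbedding

lemma eq_of_strictMono_comp_perm {y : Fin n → ℝ} {σ τ : Equiv.Perm (Fin n)}
    (hσ : StrictMono (y ∘ σ)) (hτ : StrictMono (y ∘ τ)) : σ = τ := by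
  have hy : Function.Injective y := by
    simpa [Function.comp_assoc] using hσ.injective.comp σ.symm.injective
  exact Equiv.ext fun i => hy (congrFun (Tuple.unique_monotone hσ.monotone hτ.monotone) i)

/-- The chambers `σ⁻¹(ℝⁿ_<)` tile `ℝⁿ` up to the null set of tuples with a repeated entry. -/
theorem integral_eq_factorial_mul_setIntegral_weylChamber {G : (Fin n → ℝ) → ℝ}
    (hG : Integrable G) (hsymm : ∀ (σ : Equiv.Perm (Fin n)) y, G (y ∘ σ) = G y) :
    ∫ y, G y = n ! * ∫ y in weylChamber n, G y := by
  set A : Equiv.Perm (Fin n) → Set (Fin n → ℝ) := fun σ => (· ∘ σ) ⁻¹' weylChamber n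
  have hA : ∀ σ, MeasurableSet (A σ) := fun σ =>
    (isOpen_weylChamber n).measurableSet.preimage (measurePreserving_comp_perm σ).measurable
  have hdisj : Pairwise (Function.onFun Disjoint A) := fun σ τ hne =>
    Set.disjoint_left.2 fun y hσ hτ => hne (eq_of_strictMono_comp_perm hσ hτ)
  have hcover : (⋃ σ, A σ) =ᵐ[volume] (Set.univ : Set (Fin n → ℝ)) := by
    refine ae_eq_univ.2 (measure_mono_null (fun y hy => ?_) (volume_setOf_not_injective n))
    simp only [Set.mem_compl_iff, Set.mem_iUnion, not_exists] at hy
    exact fun hinj => hy (Tuple.sort y)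
      ((Tuple.monotone_sort y).strictMono_of_injective (hinj.comp (Tuple.sort y).injective))
  have hpiece : ∀ σ, ∫ y in A σ, G y = ∫ y in weylChamber n, G y := fun σ => by
    rw [← (measurePreserving_comp_perm σ).setIntegral_preimage_emb
      (measurableEmbedding_comp_perm σ) G (weylChamber n)]
    exact setIntegral_congr_fun (hA σ) fun y _ => (hsymm σ y).symm
  rw [← setIntegral_univ, ← setIntegral_congr_set hcover, integral_iUnion hA hdisj hG.integrableOn,
    tsum_fintype, Finset.sum_congr rfl fun σ _ => hpiece σ, Finset.sum_const, Finset.card_univ,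
    Fintype.card_perm, Fintype.card_fin, nsmul_eq_mul]

end WeylChamber

section TotalPositivity

variable {n : ℕ}

lemma exists_strictMono_deriv_eq_zero {g g' : ℝ → ℝ} (hg : ∀ z, HasDerivAt g (g' z) z)
    {u : Fin (n + 1) → ℝ} (hu : StrictMono u) (hgu : ∀ i, g (u i) = 0) :
    ∃ w : Fin n → ℝ, StrictMono w ∧ ∀ i, g' (w i) = 0 := by
  have hrolle : ∀ i : Fin n, ∃ z ∈ Set.Ioo (u i.castSucc) (u i.succ), g' z = 0 := fun i =>
    exists_hasDerivAt_eq_zero (hu (Fin.castSucc_lt_succ (i := i)))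
      (fun z _ => (hg z).continuousAt.continuousWithinAt) (by rw [hgu, hgu]) fun z _ => hg z
  choose w hw hw0 using hrolle
  refine ⟨w, fun i j hij => ?_, hw0⟩
  have : u i.succ ≤ u j.castSucc := hu.monotone (Fin.succ_le_castSucc_iff.2 hij)
  linarith [(hw i).2, (hw j).1]

/-- Divide by `e^{v_0 z}` and differentiate: by Rolle's theorem the derivative, an exponential
sum with one term fewer, vanishes at `n - 1` interlacing points. -/
theorem eq_zero_of_sum_mul_exp_eq_zero {v : Fin n → ℝ} (hv : StrictMono v) {c u : Fin n → ℝ}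
    (hu : StrictMono u) (h : ∀ i, ∑ j, c j * exp (v j * u i) = 0) : c = 0 := by
  induction n with
  | zero => exact Subsingleton.elim _ _
  | succ n ih =>
    set g : ℝ → ℝ := fun z => ∑ j, c j * exp ((v j - v 0) * z)
    have hgu : ∀ i, g (u i) = 0 := fun i => by
      have : g (u i) = (∑ j, c j * exp (v j * u i)) * exp (-(v 0 * u i)) := by
        simp only [g, Finset.sum_mul, mul_assoc, ← exp_add]
        congr! 3
        ring
      rw [this, h i, zero_mul]
    have hg : ∀ z, HasDerivAt g (∑ j, c j * (exp ((v j - v 0) * z) * ((v j - v 0) * 1))) z :=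
      fun z => HasDerivAt.fun_sum fun j _ =>
        (((hasDerivAt_id' z).const_mul (v j - v 0)).exp).const_mul (c j)
    obtain ⟨w, hw, hw0⟩ := exists_strictMono_deriv_eq_zero hg hu hgu
    have hv' : StrictMono fun j : Fin n => v j.succ - v 0 := fun i j hij => by
      simpa using hv (Fin.succ_lt_succ_iff.2 hij)
    have hsucc := ih hv' (c := fun j => c j.succ * (v j.succ - v 0)) hw fun i => by
      rw [← hw0 i, Fin.sum_univ_succ]
      simp only [sub_self, zero_mul, mul_zero, zero_add]
      exact Finset.sum_congr rfl fun j _ => by ring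
    have hcsucc : ∀ j : Fin n, c j.succ = 0 := fun j => by
      have := congrFun hsucc j
      simpa [sub_eq_zero, (hv (Fin.succ_pos j)).ne'] using this
    have hc0 : c 0 = 0 := by simpa [g, Fin.sum_univ_succ, hcsucc] using hgu 0
    funext j
    exact Fin.cases hc0 hcsucc j

lemma det_exp_mul_ne_zero {u v : Fin n → ℝ} (hu : StrictMono u) (hv : StrictMono v) :
    (of fun i j => exp (u i * v j)).det ≠ 0 := fun hdet => by
  obtain ⟨c, hc, hmul⟩ := exists_mulVec_eq_zero_iff.2 hdet
  refine hc (eq_zero_of_sum_mul_exp_eq_zero hv hu fun i => ?_)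
  simpa [mulVec, dotProduct, mul_comm] using congrFun hmul i

theorem det_exp_mul_pos {u v : Fin n → ℝ} (hu : StrictMono u) (hv : StrictMono v) :
    0 < (of fun i j => exp (u i * v j)).det := by
  set F : (Fin n → ℝ) × (Fin n → ℝ) → ℝ := fun p => (of fun i j => exp (p.1 i * p.2 j)).det
  have hF : Continuous F := Continuous.matrix_det (continuous_matrix fun i j => by fun_prop)
  let idx : Fin n → ℝ := fun i => (i : ℕ)
  have hidx : StrictMono idx := fun i j hij => by simpa [idx] using hij
  have hvdm : F (idx, idx) = (vandermonde fun i => exp (idx i)).det := by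
    simp only [F]
    congr 1
    ext i j
    simp [idx, vandermonde, ← exp_nat_mul, mul_comm]
  have hF₀ : 0 < F (idx, idx) := by
    rw [hvdm, det_vandermonde]
    exact Finset.prod_pos fun i _ => Finset.prod_pos fun j hj =>
      sub_pos.2 (exp_lt_exp.2 (hidx (Finset.mem_Ioi.1 hj)))
  by_contra! hle
  obtain ⟨p, hp, hFp⟩ := ((convex_weylChamber n).prod (convex_weylChamber n)).isPreconnected
    |>.intermediate_value (a := (u, v)) (b := (idx, idx)) ⟨hu, hv⟩ ⟨hidx, hidx⟩ hF.continuousOn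
    ⟨hle, hF₀.le⟩
  exact det_exp_mul_ne_zero hp.1 hp.2 hFp

end TotalPositivity

lemma Equiv.Perm.sign_mul_sign_self {ι R : Type*} [Fintype ι] [DecidableEq ι] [Ring R]
    (σ : Equiv.Perm ι) : ((σ.sign : ℤ) : R) * (σ.sign : ℤ) = 1 := by
  rw [← Int.cast_mul, Int.units_coe_mul_self, Int.cast_one]

section Andreief

variable {α X Y : Type*} {n : ℕ}

lemma det_mul_det_eq_sum (K : X → α → ℝ) (L : α → Y → ℝ) (x : Fin n → X) (w : Fin n → Y)
    (y : Fin n → α) :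
    (of fun i j => K (x i) (y j)).det * (of fun i j => L (y i) (w j)).det =
      ∑ σ : Equiv.Perm (Fin n), ∑ τ : Equiv.Perm (Fin n), ((σ.sign : ℤ) : ℝ) * (τ.sign : ℤ) *
        ∏ i, K (x (σ i)) (y i) * L (y i) (w (τ i)) := by
  rw [det_apply', ← det_transpose, det_apply', Finset.sum_mul_sum]
  refine Finset.sum_congr rfl fun σ _ => Finset.sum_congr rfl fun τ _ => ?_
  simp only [of_apply, transpose_apply, Finset.prod_mul_distrib]
  ring

variable [MeasurableSpace α] {μ : Measure α} [SigmaFinite μ] {K : X → α → ℝ} {L : α → Y → ℝ}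

lemma integrable_det_mul_det (hKL : ∀ a b, Integrable (fun z => K a z * L z b) μ)
    (x : Fin n → X) (w : Fin n → Y) :
    Integrable (fun y => (of fun i j => K (x i) (y j)).det * (of fun i j => L (y i) (w j)).det)
      (Measure.pi fun _ => μ) := by
  simp_rw [det_mul_det_eq_sum]
  exact integrable_finsetSum _ fun σ _ => integrable_finsetSum _ fun τ _ =>
    (Integrable.fintype_prod fun i => hKL _ _).const_mul _

/-- Andréief's identity. After integrating out `y`, the term `(σ, τ)` of the double expansion
is `sign σ * sign τ * ∏ i, M (σ i) (τ i)`, and for each `σ` the sum over `τ` is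
`sign σ * det M`. -/
theorem integral_det_mul_det (hKL : ∀ a b, Integrable (fun z => K a z * L z b) μ)
    (x : Fin n → X) (w : Fin n → Y) :
    ∫ y, (of fun i j => K (x i) (y j)).det * (of fun i j => L (y i) (w j)).det
        ∂(Measure.pi fun _ => μ) =
      n ! * (of fun i j => ∫ z, K (x i) z * L z (w j) ∂μ).det := by
  set M := of fun i j => ∫ z, K (x i) z * L z (w j) ∂μ
  have hint : ∀ σ τ : Equiv.Perm (Fin n), Integrable (fun y => ((σ.sign : ℤ) : ℝ) * (τ.sign : ℤ) *
      ∏ i, K (x (σ i)) (y i) * L (y i) (w (τ i))) (Measure.pi fun _ => μ) :=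
    fun σ τ => (Integrable.fintype_prod fun i => hKL _ _).const_mul _
  have hterm : ∀ σ τ : Equiv.Perm (Fin n),
      ∫ y, ((σ.sign : ℤ) : ℝ) * (τ.sign : ℤ) * ∏ i, K (x (σ i)) (y i) * L (y i) (w (τ i))
        ∂(Measure.pi fun _ => μ) = (σ.sign : ℤ) * (τ.sign : ℤ) * ∏ i, M (σ i) (τ i) :=
    fun σ τ => by
      rw [integral_const_mul, integral_fintype_prod_eq_prod
        (fun i z => K (x (σ i)) z * L z (w (τ i)))]
      rfl
  have hrow : ∀ σ : Equiv.Perm (Fin n),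
      ∑ τ : Equiv.Perm (Fin n), ((σ.sign : ℤ) : ℝ) * (τ.sign : ℤ) * ∏ i, M (σ i) (τ i) = M.det :=
    fun σ => by
      have : (M.submatrix σ id).det = ∑ τ : Equiv.Perm (Fin n), ((τ.sign : ℤ) : ℝ) *
          ∏ i, M (σ i) (τ i) := by
        rw [← det_transpose, det_apply']
        rfl
      simp_rw [mul_assoc, ← Finset.mul_sum, ← this, det_permute, ← mul_assoc,
        Equiv.Perm.sign_mul_sign_self, one_mul]
  simp_rw [det_mul_det_eq_sum]
  rw [integral_finsetSum _ fun σ _ => integrable_finsetSum _ fun τ _ => hint σ τ]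
  simp_rw [integral_finsetSum _ fun τ _ => hint _ τ, hterm, hrow]
  rw [Finset.sum_const, Finset.card_univ, Fintype.card_perm, Fintype.card_fin, nsmul_eq_mul]

end Andreief

section KarlinMcGregor

variable {N : ℕ}

lemma continuous_fKM (N : ℕ) (t : ℝ) :
    Continuous fun p : (Fin N → ℝ) × (Fin N → ℝ) => fKM N t p.1 p.2 :=
  Continuous.matrix_det <| continuous_matrix fun i j =>
    (continuous_heatKernel t).comp₂ ((continuous_apply i).comp continuous_fst)
      ((continuous_apply j).comp continuous_snd)

lemma integrable_fKM (N : ℕ) (t : ℝ) (x : Fin N → ℝ) : Integrable (fKM N t x) := by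
  simp_rw [funext fun y => (show fKM N t x y = _ from det_apply' _)]
  exact integrable_finsetSum _ fun σ _ =>
    (Integrable.fintype_prod fun i => integrable_heatKernel t (x (σ i))).const_mul _

/-- Splitting `p_t(x, y) = c(x) e^{x y / t} d(y)` reduces positivity to `det_exp_mul_pos`. -/
theorem fKM_pos {t : ℝ} (ht : 0 < t) {x y : Fin N → ℝ} (hx : x ∈ weylChamber N)
    (hy : y ∈ weylChamber N) : 0 < fKM N t x y := by
  have hsplit : (of fun i j => heatKernel t (x i) (y j)) =
      diagonal (fun i => 1 / √(2 * π * t) * exp (-x i ^ 2 / (2 * t))) *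
        (of fun i j => exp (x i * (y j / t))) * diagonal fun j => exp (-y j ^ 2 / (2 * t)) := by
    ext i j
    simp only [mul_diagonal, diagonal_mul, of_apply, heatKernel, mul_assoc, ← exp_add]
    congr 2
    field_simp
    ring
  have hyt : StrictMono fun j => y j / t := fun i j hij => div_lt_div_of_pos_right (hy hij) ht
  rw [fKM, hsplit, det_mul, det_mul, det_diagonal, det_diagonal]
  exact mul_pos (mul_pos (Finset.prod_pos fun i _ => by positivity) (det_exp_mul_pos hx hyt))
    (Finset.prod_pos fun j _ => exp_pos _)

lemma fKM_comp_perm_mul_fKM_comp_perm (a b : ℝ) (x y w : Fin N → ℝ) (σ : Equiv.Perm (Fin N)) :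
    fKM N a x (y ∘ σ) * fKM N b (y ∘ σ) w = fKM N a x y * fKM N b y w := by
  have h₁ : fKM N a x (y ∘ σ) = (σ.sign : ℤ) * fKM N a x y :=
    det_permute' σ (of fun i j => heatKernel a (x i) (y j))
  have h₂ : fKM N b (y ∘ σ) w = (σ.sign : ℤ) * fKM N b y w :=
    det_permute σ (of fun i j => heatKernel b (y i) (w j))
  rw [h₁, h₂, mul_mul_mul_comm, Equiv.Perm.sign_mul_sign_self, one_mul]

theorem setIntegral_fKM_mul_fKM {a b : ℝ} (ha : 0 < a) (hb : 0 < b) (x w : Fin N → ℝ) :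
    ∫ y in weylChamber N, fKM N a x y * fKM N b y w = fKM N (a + b) x w := by
  have hKL := integrable_heatKernel_mul_heatKernel ha hb
  have hsymm := integral_eq_factorial_mul_setIntegral_weylChamber
    (integrable_det_mul_det (μ := volume) hKL x w)
    fun σ y => fKM_comp_perm_mul_fKM_comp_perm a b x y w σ
  have hfull := integral_det_mul_det (μ := volume) hKL x w
  simp_rw [← volume_pi, integral_heatKernel_mul_heatKernel ha hb] at hfull
  rw [hfull] at hsymm
  exact (mul_left_cancel₀ (Nat.cast_ne_zero.2 N.factorial_ne_zero) hsymm).symm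

lemma NKM_pos {t : ℝ} (ht : 0 < t) {x : Fin N → ℝ} (hx : x ∈ weylChamber N) : 0 < NKM N t x := by
  have hW := isOpen_weylChamber N
  rw [NKM, setIntegral_pos_iff_support_of_nonneg_ae
    ((ae_restrict_iff' hW.measurableSet).2 (.of_forall fun y hy => (fKM_pos ht hx hy).le))
    (integrable_fKM N t x).integrableOn]
  refine (hW.measure_pos volume ⟨x, hx⟩).trans_le (measure_mono fun y hy => ?_)
  exact ⟨(fKM_pos ht hx hy).ne', hy⟩

/-- Fubini applies because the integrand is positive on the chamber, so its absolute
`y`-integral is the integrable function `fKM N (a + b) x`. -/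
theorem setIntegral_fKM_mul_NKM {a b : ℝ} (ha : 0 < a) (hb : 0 < b) {x : Fin N → ℝ}
    (hx : x ∈ weylChamber N) :
    ∫ y in weylChamber N, fKM N a x y * NKM N b y = NKM N (a + b) x := by
  have hW : MeasurableSet (weylChamber N) := (isOpen_weylChamber N).measurableSet
  have hKL := integrable_heatKernel_mul_heatKernel ha hb
  have hF : Integrable (fun p : (Fin N → ℝ) × (Fin N → ℝ) => fKM N a x p.1 * fKM N b p.1 p.2)
      ((volume.restrict (weylChamber N)).prod (volume.restrict (weylChamber N))) := by
    have hcont : Continuous fun p : (Fin N → ℝ) × (Fin N → ℝ) =>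
        fKM N a x p.1 * fKM N b p.1 p.2 :=
      ((continuous_fKM N a).comp (continuous_const.prodMk continuous_fst)).mul
        (continuous_fKM N b)
    refine (integrable_prod_iff' hcont.aestronglyMeasurable).2 ⟨.of_forall fun w =>
      (integrable_det_mul_det (μ := volume) hKL x w).restrict,
      (integrable_fKM N (a + b) x).integrableOn.congr ?_⟩
    refine (ae_restrict_iff' hW).2 (.of_forall fun w hw => ?_)
    rw [← setIntegral_fKM_mul_fKM ha hb]
    refine setIntegral_congr_fun hW fun y hy => (Real.norm_of_nonneg ?_).symm
    exact (mul_pos (fKM_pos ha hx hy) (fKM_pos hb hy hw)).le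
  calc ∫ y in weylChamber N, fKM N a x y * NKM N b y
      = ∫ y in weylChamber N, ∫ w in weylChamber N, fKM N a x y * fKM N b y w := by
        simp_rw [NKM, integral_const_mul]
    _ = ∫ w in weylChamber N, ∫ y in weylChamber N, fKM N a x y * fKM N b y w :=
        integral_integral_swap hF
    _ = NKM N (a + b) x := by simp_rw [setIntegral_fKM_mul_fKM ha hb]; rfl

end KarlinMcGregor

theorem transitionDensity_integral_one_general (N : ℕ) (T s t : ℝ) (hst : s < t)
    (htT : t < T) (x : Fin N → ℝ) (hx : x ∈ weylChamber N) :
    ∫ y in weylChamber N, fKM N (t - s) x y * NKM N (T - t) y / NKM N (T - s) x = 1 := by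
  have hN : NKM N (T - s) x ≠ 0 := (NKM_pos (by linarith) hx).ne'
  simp_rw [div_eq_mul_inv]
  rw [integral_mul_const, setIntegral_fKM_mul_NKM (by linarith) (by linarith) hx,
    sub_add_sub_cancel', mul_inv_cancel₀ hN]

/-- The transition probability density `g_{N,T}(s, x; t, y)` of the non-colliding system
integrates to one over the Weyl chamber. -/
theorem transitionDensity_integral_one (N : ℕ) (T s t : ℝ) (hs : 0 < s) (hst : s < t)
    (htT : t < T) (x : Fin N → ℝ) (hx : x ∈ weylChamber N) :
    ∫ y in weylChamber N, fKM N (t - s) x y * NKM N (T - t) y / NKM N (T - s) x = 1 :=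
  transitionDensity_integral_one_general N T s t hst htT x hx
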